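/- arXiv:2503.07843 — 4 statements merged into one kernel-verified Lean document; each statement's English description precedes it below -/
import Mathlib

section
/- An affine Lorentz transformation x ↦ Bx + t with B ∈ L_n⁺ (upper-triangular with λ = 1 in the top-left entry after the normalization, i.e. of the stated form) and t = (v, δ, 0) fixes the point u₀ = (0,…,0,1) if and only if λ = 1, v = ‖β‖²/2, and δ = Aβ. Consequently the stabilizer of u₀ in the lightlike Poincaré group LP(n) is isomorphic to O(n) ⋉ ℝⁿ, the Euclidean group Euc_n. -/
open scoped Matrix

/-- The model of Minkowski space `ℝ^{n+2}` with coordinates `(v, δ, u)`. -/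
abbrev Mink (n : ℕ) := ℝ × (Fin n → ℝ) × ℝ

/-- The block upper-triangular linear map
`B = [[λ, βᵀ, a], [0, A, α], [0, 0, λ⁻¹]]` acting on `(v, δ, u)`. -/
noncomputable def Bmap {n : ℕ} (lam : ℝ) (β : Fin n → ℝ) (a : ℝ)
    (A : Matrix (Fin n) (Fin n) ℝ) (α : Fin n → ℝ) (X : Mink n) : Mink n :=
  (lam * X.1 + β ⬝ᵥ X.2.1 + a * X.2.2, A.mulVec X.2.1 + X.2.2 • α, lam⁻¹ * X.2.2)

/-- The linear part of an element of the lightlike Poincaré group. -/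
noncomputable def LPlin {n : ℕ} (lam : ℝ) (β : Fin n → ℝ)
    (A : Matrix (Fin n) (Fin n) ℝ) (X : Mink n) : Mink n :=
  Bmap lam β (-(lam⁻¹ / 2) * ∑ i, β i ^ 2) A (-(lam⁻¹ • A.mulVec β)) X

/-- An affine element `x ↦ Bx + t` of the lightlike Poincaré group `LP(n)`. -/
noncomputable def LPaff {n : ℕ} (lam : ℝ) (β : Fin n → ℝ)
    (A : Matrix (Fin n) (Fin n) ℝ) (tr : Mink n) (X : Mink n) : Mink n :=
  LPlin lam β A X + tr

/-- The point `u₀ = (0, …, 0, 1)` of the half-space `C_n = {u > 0}`. -/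
def basePt (n : ℕ) : Mink n := (0, 0, 1)

/-!
An element `x ↦ Bx + t` of `LP(n)` with `t = (v, δ, 0)` sends `u₀` to
`(v - ‖β‖²/(2λ), δ - λ⁻¹Aβ, λ⁻¹)`, which gives the criterion. So the stabilizer consists of the maps
`E(b, A) := LPaff 1 (Aᵀb) A (‖b‖²/2, b, 0)`, i.e. `(v, δ, u) ↦ (v + b·Aδ + (1-u)‖b‖²/2, Aδ + (1-u)b, u)`,
and `E(b₁, A₁) ∘ E(b₂, A₂) = E(b₁ + A₁b₂, A₁A₂)` is the multiplication of `ℝⁿ ⋊ O(n)`.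
The homomorphism `(b, A) ↦ E(b, A)` is injective, since `E(b, A)` reads off `b` at the origin
and `A` on the slice `u = 1`.
-/

namespace LightlikePoincare

section Orthogonal

variable {m R : Type*} [Fintype m] [CommRing R] {A : Matrix m m R}

lemma transpose_mulVec_dotProduct (x y : m → R) : Aᵀ *ᵥ x ⬝ᵥ y = x ⬝ᵥ A *ᵥ y := by
  rw [Matrix.mulVec_transpose, Matrix.dotProduct_mulVec]

variable [DecidableEq m]

lemma transpose_mem_orthogonalGroup (hA : A ∈ Matrix.orthogonalGroup m R) :
    Aᵀ ∈ Matrix.orthogonalGroup m R := by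
  rw [Matrix.mem_orthogonalGroup_iff, Matrix.transpose_transpose]
  exact (Matrix.mem_orthogonalGroup_iff' _ _).mp hA

lemma mulVec_transpose_mulVec (hA : A ∈ Matrix.orthogonalGroup m R) (x : m → R) :
    A *ᵥ (Aᵀ *ᵥ x) = x := by
  rw [Matrix.mulVec_mulVec, (Matrix.mem_orthogonalGroup_iff _ _).mp hA, Matrix.one_mulVec]

lemma transpose_mulVec_mulVec (hA : A ∈ Matrix.orthogonalGroup m R) (x : m → R) :
    Aᵀ *ᵥ (A *ᵥ x) = x := by
  rw [Matrix.mulVec_mulVec, (Matrix.mem_orthogonalGroup_iff' _ _).mp hA, Matrix.one_mulVec]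

lemma mulVec_dotProduct_mulVec (hA : A ∈ Matrix.orthogonalGroup m R) (x y : m → R) :
    A *ᵥ x ⬝ᵥ A *ᵥ y = x ⬝ᵥ y := by
  rw [← transpose_mulVec_dotProduct, transpose_mulVec_mulVec hA]

end Orthogonal

variable {n : ℕ}

lemma sum_sq_eq_dotProduct (β : Fin n → ℝ) : ∑ i, β i ^ 2 = β ⬝ᵥ β := by
  simp [dotProduct, sq]

lemma LPlin_apply (lam : ℝ) (β : Fin n → ℝ) (A : Matrix (Fin n) (Fin n) ℝ) (X : Mink n) :
    LPlin lam β A X =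
      (lam * X.1 + β ⬝ᵥ X.2.1 - lam⁻¹ / 2 * (β ⬝ᵥ β) * X.2.2,
       A *ᵥ X.2.1 - (X.2.2 * lam⁻¹) • A *ᵥ β, lam⁻¹ * X.2.2) := by
  simp only [LPlin, Bmap, sum_sq_eq_dotProduct, smul_neg, smul_smul, neg_mul, sub_eq_add_neg]

lemma LPlin_add (lam : ℝ) (β : Fin n → ℝ) (A : Matrix (Fin n) (Fin n) ℝ) (X Y : Mink n) :
    LPlin lam β A (X + Y) = LPlin lam β A X + LPlin lam β A Y := by
  simp only [LPlin_apply, Prod.fst_add, Prod.snd_add, dotProduct_add, Matrix.mulVec_add,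
    Prod.mk_add_mk, Prod.mk.injEq]
  refine ⟨by ring, by module, by ring⟩

lemma LPlin_comp {l₁ l₂ : ℝ} (hl₁ : l₁ ≠ 0) (hl₂ : l₂ ≠ 0) (β₁ β₂ : Fin n → ℝ)
    (A₁ : Matrix (Fin n) (Fin n) ℝ) {A₂ : Matrix (Fin n) (Fin n) ℝ}
    (hA₂ : A₂ ∈ Matrix.orthogonalGroup (Fin n) ℝ) (X : Mink n) :
    LPlin l₁ β₁ A₁ (LPlin l₂ β₂ A₂ X) = LPlin (l₁ * l₂) (l₁ • β₂ + A₂ᵀ *ᵥ β₁) (A₁ * A₂) X := by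
  have hsq : (l₁ • β₂ + A₂ᵀ *ᵥ β₁) ⬝ᵥ (l₁ • β₂ + A₂ᵀ *ᵥ β₁)
      = l₁ ^ 2 * (β₂ ⬝ᵥ β₂) + 2 * l₁ * (β₁ ⬝ᵥ A₂ *ᵥ β₂) + β₁ ⬝ᵥ β₁ := by
    simp only [add_dotProduct, dotProduct_add, smul_dotProduct, dotProduct_smul, smul_eq_mul,
      transpose_mulVec_dotProduct, dotProduct_comm β₂ (A₂ᵀ *ᵥ β₁),
      mulVec_transpose_mulVec hA₂]
    ring
  simp only [LPlin_apply, hsq, Prod.mk.injEq, dotProduct_sub, dotProduct_smul, add_dotProduct,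
    smul_dotProduct, transpose_mulVec_dotProduct, smul_eq_mul, Matrix.mulVec_sub,
    Matrix.mulVec_smul, Matrix.mulVec_add, Matrix.mulVec_mulVec]
  refine ⟨?_, ?_, ?_⟩
  · field_simp
    ring
  · rw [Matrix.mul_assoc A₁, (Matrix.mem_orthogonalGroup_iff _ _).mp hA₂, Matrix.mul_one]
    match_scalars <;> field_simp
  · rw [mul_inv]
    ring

lemma LPaff_comp {l₁ l₂ : ℝ} (hl₁ : l₁ ≠ 0) (hl₂ : l₂ ≠ 0) (β₁ β₂ : Fin n → ℝ)
    (A₁ : Matrix (Fin n) (Fin n) ℝ) {A₂ : Matrix (Fin n) (Fin n) ℝ}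
    (hA₂ : A₂ ∈ Matrix.orthogonalGroup (Fin n) ℝ) (t₁ t₂ X : Mink n) :
    LPaff l₁ β₁ A₁ t₁ (LPaff l₂ β₂ A₂ t₂ X) =
      LPaff (l₁ * l₂) (l₁ • β₂ + A₂ᵀ *ᵥ β₁) (A₁ * A₂) (LPlin l₁ β₁ A₁ t₂ + t₁) X := by
  simp only [LPaff, LPlin_add, LPlin_comp hl₁ hl₂ β₁ β₂ A₁ hA₂, add_assoc]

lemma LPaff_one (X : Mink n) : LPaff 1 0 1 0 X = X := by
  simp [LPaff, LPlin_apply]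

lemma LPaff_inv_comp {lam : ℝ} (hlam : lam ≠ 0) (β : Fin n → ℝ) {A : Matrix (Fin n) (Fin n) ℝ}
    (hA : A ∈ Matrix.orthogonalGroup (Fin n) ℝ) (tr X : Mink n) :
    LPaff lam⁻¹ (-(lam⁻¹ • A *ᵥ β)) Aᵀ (-LPlin lam⁻¹ (-(lam⁻¹ • A *ᵥ β)) Aᵀ tr)
      (LPaff lam β A tr X) = X := by
  rw [LPaff_comp (inv_ne_zero hlam) hlam _ _ _ hA, inv_mul_cancel₀ hlam, Matrix.mulVec_neg,
    Matrix.mulVec_smul, transpose_mulVec_mulVec hA, add_neg_cancel,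
    (Matrix.mem_orthogonalGroup_iff' _ _).mp hA, add_neg_cancel, LPaff_one]

variable (n) in
noncomputable def lpGroup : Subgroup (Equiv.Perm (Mink n)) where
  carrier := {g | ∃ (lam : ℝ) (β : Fin n → ℝ) (A : Matrix (Fin n) (Fin n) ℝ) (tr : Mink n),
    0 < lam ∧ A ∈ Matrix.orthogonalGroup (Fin n) ℝ ∧ tr.2.2 = 0 ∧ ∀ X, g X = LPaff lam β A tr X}
  one_mem' := ⟨1, 0, 1, 0, one_pos, one_mem _, rfl, fun X => (LPaff_one X).symm⟩
  mul_mem' := by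
    rintro g h ⟨l₁, β₁, A₁, t₁, hl₁, hA₁, ht₁, hg⟩ ⟨l₂, β₂, A₂, t₂, hl₂, hA₂, ht₂, hh⟩
    refine ⟨l₁ * l₂, l₁ • β₂ + A₂ᵀ *ᵥ β₁, A₁ * A₂, LPlin l₁ β₁ A₁ t₂ + t₁, mul_pos hl₁ hl₂,
       mul_mem hA₁ hA₂, ?_, fun X => ?_⟩
    · simp [LPlin_apply, ht₁, ht₂]
    · rw [Equiv.Perm.mul_apply, hh, hg, LPaff_comp hl₁.ne' hl₂.ne' β₁ β₂ A₁ hA₂]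
  inv_mem' := by
    rintro g ⟨lam, β, A, tr, hlam, hA, htr, hg⟩
    refine ⟨lam⁻¹, -(lam⁻¹ • A *ᵥ β), Aᵀ, -LPlin lam⁻¹ (-(lam⁻¹ • A *ᵥ β)) Aᵀ tr,
      inv_pos.mpr hlam, transpose_mem_orthogonalGroup hA, ?_, fun X => ?_⟩
    · simp [LPlin_apply, htr]
    · rw [← LPaff_inv_comp hlam.ne' β hA tr (g⁻¹ X), ← hg, ← Equiv.Perm.mul_apply, mul_inv_cancel,
        Equiv.Perm.one_apply]

lemma LPaff_basePt_eq_iff (lam : ℝ) (β : Fin n → ℝ) (A : Matrix (Fin n) (Fin n) ℝ) (v : ℝ)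
    (δ : Fin n → ℝ) :
    LPaff lam β A (v, δ, 0) (basePt n) = basePt n ↔
      lam = 1 ∧ v = (∑ i, β i ^ 2) / 2 ∧ δ = A *ᵥ β := by
  simp only [LPaff, LPlin_apply, basePt, sum_sq_eq_dotProduct, Prod.mk_add_mk, Prod.mk.injEq,
    dotProduct_zero, Matrix.mulVec_zero, mul_zero, mul_one, one_mul, add_zero, zero_sub]
  constructor
  · rintro ⟨hv, hδ, hlam⟩
    obtain rfl : lam = 1 := inv_eq_one.mp hlam
    refine ⟨rfl, by linarith, ?_⟩
    simpa [neg_add_eq_zero, eq_comm] using hδ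
  · rintro ⟨rfl, rfl, rfl⟩
    exact ⟨by ring, by simp, inv_one⟩

noncomputable def eucMap (b : Fin n → ℝ) (A : Matrix (Fin n) (Fin n) ℝ) : Mink n → Mink n :=
  LPaff 1 (Aᵀ *ᵥ b) A (b ⬝ᵥ b / 2, b, 0)

lemma eucMap_apply {A : Matrix (Fin n) (Fin n) ℝ} (hA : A ∈ Matrix.orthogonalGroup (Fin n) ℝ)
    (b : Fin n → ℝ) (X : Mink n) :
    eucMap b A X = (X.1 + b ⬝ᵥ A *ᵥ X.2.1 + (1 - X.2.2) * (b ⬝ᵥ b) / 2,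
      A *ᵥ X.2.1 + (1 - X.2.2) • b, X.2.2) := by
  simp only [eucMap, LPaff, LPlin_apply, transpose_mulVec_dotProduct,
    mulVec_dotProduct_mulVec (transpose_mem_orthogonalGroup hA), mulVec_transpose_mulVec hA,
    Prod.mk_add_mk, Prod.mk.injEq]
  refine ⟨by ring, by module, by ring⟩

lemma eucMap_comp {A₁ A₂ : Matrix (Fin n) (Fin n) ℝ}
    (hA₁ : A₁ ∈ Matrix.orthogonalGroup (Fin n) ℝ) (hA₂ : A₂ ∈ Matrix.orthogonalGroup (Fin n) ℝ)
    (b₁ b₂ : Fin n → ℝ) (X : Mink n) :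
    eucMap b₁ A₁ (eucMap b₂ A₂ X) = eucMap (b₁ + A₁ *ᵥ b₂) (A₁ * A₂) X := by
  rw [eucMap_apply (mul_mem hA₁ hA₂), ← Matrix.mulVec_mulVec, eucMap_apply hA₁, eucMap_apply hA₂]
  simp only [Matrix.mulVec_add, Matrix.mulVec_smul, dotProduct_add, add_dotProduct,
    dotProduct_smul, smul_eq_mul, mulVec_dotProduct_mulVec hA₁, dotProduct_comm (A₁ *ᵥ b₂) b₁,
    Prod.mk.injEq, and_true]
  exact ⟨by ring, by module⟩

lemma eucMap_zero_one (X : Mink n) : eucMap 0 1 X = X := by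
  simpa [eucMap, Prod.mk_zero_zero] using LPaff_one X

noncomputable def eucPerm (b : Fin n → ℝ) (A : Matrix.orthogonalGroup (Fin n) ℝ) :
    Equiv.Perm (Mink n) where
  toFun := eucMap b A
  invFun := eucMap (-((A : Matrix (Fin n) (Fin n) ℝ)ᵀ *ᵥ b)) (A : Matrix (Fin n) (Fin n) ℝ)ᵀ
  left_inv X := by
    rw [eucMap_comp (transpose_mem_orthogonalGroup A.2) A.2, neg_add_cancel,
      (Matrix.mem_orthogonalGroup_iff' _ _).mp A.2, eucMap_zero_one]
  right_inv X := by
    rw [eucMap_comp A.2 (transpose_mem_orthogonalGroup A.2), Matrix.mulVec_neg,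
      mulVec_transpose_mulVec A.2, add_neg_cancel, (Matrix.mem_orthogonalGroup_iff _ _).mp A.2,
      eucMap_zero_one]

variable (n) in
noncomputable def orthogonalMulAut :
    Matrix.orthogonalGroup (Fin n) ℝ →* MulAut (Multiplicative (Fin n → ℝ)) :=
  MonoidHom.mk' (fun A => (Matrix.UnitaryGroup.toLinearEquiv A).toAddEquiv.toMultiplicative)
    fun A B => MulEquiv.ext fun x =>
      congrArg Multiplicative.ofAdd (Matrix.mulVec_mulVec x.toAdd A.1 B.1).symm

variable (n) in
noncomputable def eucHom :
    SemidirectProduct (Multiplicative (Fin n → ℝ)) (Matrix.orthogonalGroup (Fin n) ℝ)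
      (orthogonalMulAut n) →* Equiv.Perm (Mink n) :=
  MonoidHom.mk' (fun p => eucPerm p.left.toAdd p.right)
    fun p q => Equiv.ext fun X => (eucMap_comp p.right.2 q.right.2 _ _ X).symm

lemma eucHom_injective : Function.Injective (eucHom n) := by
  rw [injective_iff_map_eq_one]
  rintro ⟨b, A⟩ h
  have hfix (X : Mink n) : eucMap b.toAdd A X = X := Equiv.congr_fun h X
  have hb : b.toAdd = 0 := by simpa [eucMap_apply A.2] using hfix 0
  have hA : (A : Matrix (Fin n) (Fin n) ℝ) = 1 := by
    rw [Matrix.ext_iff_mulVec]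
    intro x
    simpa [eucMap_apply A.2] using congrArg (·.2.1) (hfix (0, x, 1))
  exact SemidirectProduct.ext hb (Subtype.ext hA)

lemma range_eucHom : (eucHom n).range =
    lpGroup n ⊓ MulAction.stabilizer (Equiv.Perm (Mink n)) (basePt n) := by
  ext g
  constructor
  · rintro ⟨⟨b, A⟩, rfl⟩
    refine ⟨⟨1, _, A, (b.toAdd ⬝ᵥ b.toAdd / 2, b.toAdd, 0), one_pos, A.2, rfl, fun X => rfl⟩, ?_⟩
    change eucMap b.toAdd A (basePt n) = basePt n
    simp [eucMap_apply A.2, basePt]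
  · rw [Subgroup.mem_inf]
    rintro ⟨⟨lam, β, A, ⟨v, δ, u⟩, -, hA, rfl, hg⟩, hfix⟩
    rw [MulAction.mem_stabilizer_iff, Equiv.Perm.smul_def, hg, LPaff_basePt_eq_iff] at hfix
    obtain ⟨rfl, rfl, rfl⟩ := hfix
    refine ⟨⟨Multiplicative.ofAdd (A *ᵥ β), ⟨A, hA⟩⟩, Equiv.ext fun X => ?_⟩
    change eucMap (A *ᵥ β) A X = g X
    rw [hg, eucMap, transpose_mulVec_mulVec hA, mulVec_dotProduct_mulVec hA, sum_sq_eq_dotProduct]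

end LightlikePoincare

/-- an affine Lorentz transformation `x ↦ Bx + t`, with `B` of the stated
form (`λ > 0`, `β ∈ ℝⁿ`, `A ∈ O(n)`) and `t = (v, δ, 0)`, fixes `u₀ = (0,…,0,1)` iff
`λ = 1`, `v = ‖β‖²/2` and `δ = Aβ`.  Consequently the stabilizer of `u₀` in the
lightlike Poincaré group `LP(n)` (realized as a group of bijections of `ℝ^{n+2}`) is
isomorphic to `O(n) ⋉ ℝⁿ`, the Euclidean group `Euc_n`. -/
theorem LP_stabilizer_of_basePt (n : ℕ) :
    (∀ (lam : ℝ) (β : Fin n → ℝ) (A : Matrix (Fin n) (Fin n) ℝ) (v : ℝ) (δ : Fin n → ℝ),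
      0 < lam → A ∈ Matrix.orthogonalGroup (Fin n) ℝ →
        (LPaff lam β A (v, δ, 0) (basePt n) = basePt n ↔
          lam = 1 ∧ v = (∑ i, β i ^ 2) / 2 ∧ δ = A.mulVec β)) ∧
    ∃ LP : Subgroup (Equiv.Perm (Mink n)),
      ((LP : Set (Equiv.Perm (Mink n))) =
        {g | ∃ (lam : ℝ) (β : Fin n → ℝ) (A : Matrix (Fin n) (Fin n) ℝ) (tr : Mink n),
          0 < lam ∧ A ∈ Matrix.orthogonalGroup (Fin n) ℝ ∧ tr.2.2 = 0 ∧
            ∀ X, g X = LPaff lam β A tr X}) ∧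
      ∃ φ : Matrix.orthogonalGroup (Fin n) ℝ →* MulAut (Multiplicative (Fin n → ℝ)),
        (∀ (A : Matrix.orthogonalGroup (Fin n) ℝ) (x : Fin n → ℝ),
          Multiplicative.toAdd (φ A (Multiplicative.ofAdd x)) =
            (A : Matrix (Fin n) (Fin n) ℝ).mulVec x) ∧
        Nonempty (↥(LP ⊓ MulAction.stabilizer (Equiv.Perm (Mink n)) (basePt n)) ≃*
          SemidirectProduct (Multiplicative (Fin n → ℝ))
            (Matrix.orthogonalGroup (Fin n) ℝ) φ) := by
  refine ⟨fun lam β A v δ _ _ => LightlikePoincare.LPaff_basePt_eq_iff lam β A v δ,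
    LightlikePoincare.lpGroup n, rfl, LightlikePoincare.orthogonalMulAut n, fun _ _ => rfl, ⟨?_⟩⟩
  exact (MulEquiv.subgroupCongr LightlikePoincare.range_eucHom.symm).trans
    (MonoidHom.ofInjective LightlikePoincare.eucHom_injective).symm
end

section
/- The lightlike Poincaré group LP(n) acts transitively on the half-Minkowski space C_n = {(v, δ, u) ∈ ℝ^{n+2} : u > 0}. -/
open scoped Matrix

/-- the lightlike Poincaré group `LP(n)` (affine maps `x ↦ Bx + t` with `B`
of the above form, `λ > 0`, `A ∈ O(n)`, and translation part `t` in the hyperplane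
`{u = 0}`) acts transitively on the half-Minkowski space `C_n = {u > 0}`. -/
theorem LP_transitive_on_half_Minkowski (n : ℕ) (X Y : Mink n)
    (hX : 0 < X.2.2) (hY : 0 < Y.2.2) :
    ∃ (lam : ℝ) (β : Fin n → ℝ) (A : Matrix (Fin n) (Fin n) ℝ) (tr : Mink n),
      0 < lam ∧ A ∈ Matrix.orthogonalGroup (Fin n) ℝ ∧ tr.2.2 = 0 ∧
        LPaff lam β A tr X = Y := by
  refine ⟨X.2.2 / Y.2.2, 0, 1, (Y.1 - (X.2.2 / Y.2.2) * X.1, Y.2.1 - X.2.1, 0),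
    div_pos hX hY, ?_, rfl, ?_⟩
  · simp [Matrix.mem_orthogonalGroup_iff]
  · have h : (X.2.2 / Y.2.2)⁻¹ * X.2.2 = Y.2.2 := by
      field_simp
    simp only [LPaff, LPlin, Bmap, Matrix.mulVec_one, Matrix.mulVec_zero, smul_zero, neg_zero,
      Prod.ext_iff, Matrix.one_mulVec]
    constructor
    · simp
    constructor
    · funext i; simp
    · simpa using h
end

section
/- There is no discrete subgroup of Isom(dS^{1,n}) = O(1,n+1) (n ≥ 1) acting properly discontinuously and cocompactly on dS^{1,n}: if Γ ⊆ O(1,n+1) acts properly discontinuously on dS^{1,n}, then Γ is finite (Calabi–Markus phenomenon), hence the quotient is non-compact since dS^{1,n} is non-compact. -/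
/-- The Lorentz quadratic form of signature `(1, n+1)` on `ℝ^{n+2}`. -/
def lorentzQ (n : ℕ) (x : Fin (n + 2) → ℝ) : ℝ :=
  -(x 0) ^ 2 + ∑ i : Fin (n + 1), x i.succ ^ 2

/-- De Sitter space `dS^{1,n} = {x ∈ ℝ^{1,n+1} : ⟨x,x⟩ = 1}`. -/
def deSitter (n : ℕ) : Set (Fin (n + 2) → ℝ) := {x | lorentzQ n x = 1}

open Matrix Module

lemma lorentzQ_smul (n : ℕ) (c : ℝ) (x : Fin (n + 2) → ℝ) :
    lorentzQ n (c • x) = c ^ 2 * lorentzQ n x := by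
  simp only [lorentzQ, Pi.smul_apply, smul_eq_mul, mul_pow, Finset.mul_sum, mul_add]
  ring_nf

lemma lorentzQ_continuous (n : ℕ) : Continuous (lorentzQ n) := by
  unfold lorentzQ
  fun_prop

/-- The unit sphere in the hyperplane `x 0 = 0`. -/
def eqSphere (n : ℕ) : Set (Fin (n + 2) → ℝ) := {x | x 0 = 0 ∧ lorentzQ n x = 1}

lemma eqSphere_subset (n : ℕ) : eqSphere n ⊆ deSitter n := fun _ hx => hx.2

lemma eqSphere_compact (n : ℕ) : IsCompact (eqSphere n) := by
  have hclosed : IsClosed (eqSphere n) := by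
    have h1 : IsClosed {x : Fin (n + 2) → ℝ | x 0 = 0} :=
      isClosed_eq (continuous_apply 0) continuous_const
    have h2 : IsClosed {x : Fin (n + 2) → ℝ | lorentzQ n x = 1} :=
      isClosed_eq (lorentzQ_continuous n) continuous_const
    exact h1.inter h2
  refine (isCompact_closedBall (0 : Fin (n + 2) → ℝ) 1).of_isClosed_subset hclosed ?_
  intro x hx
  rw [Metric.mem_closedBall, dist_zero_right]
  rw [pi_norm_le_iff_of_nonneg zero_le_one]
  have hsum : ∑ i : Fin (n + 1), x i.succ ^ 2 = 1 := by
    have := hx.2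
    rw [lorentzQ, hx.1] at this
    linarith
  intro i
  induction i using Fin.cases with
  | zero => simp [hx.1]
  | succ j =>
    have h1 : x j.succ ^ 2 ≤ 1 := by
      rw [← hsum]
      exact Finset.single_le_sum (fun i _ => sq_nonneg (x i.succ)) (Finset.mem_univ j)
    rw [Real.norm_eq_abs, ← Real.sqrt_one, ← Real.sqrt_sq_eq_abs]
    exact Real.sqrt_le_sqrt (by linarith)

lemma lorentzQ_pos_of_mem_hyp (n : ℕ) (v : Fin (n + 2) → ℝ) (h0 : v 0 = 0) (hv : v ≠ 0) :
    0 < lorentzQ n v := by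
  obtain ⟨i, hi⟩ : ∃ i, v i ≠ 0 := Function.ne_iff.mp hv
  have hine : i ≠ 0 := fun h => hi (h ▸ h0)
  obtain ⟨j, rfl⟩ := Fin.eq_succ_of_ne_zero hine
  have hle : v j.succ ^ 2 ≤ ∑ i : Fin (n + 1), v i.succ ^ 2 :=
    Finset.single_le_sum (fun i _ => sq_nonneg (v i.succ)) (Finset.mem_univ j)
  have hpos : 0 < v j.succ ^ 2 := pow_pos (abs_pos.mpr hi) 2 |>.trans_le (by rw [sq_abs])
  rw [lorentzQ, h0]
  nlinarith

/-- Key geometric fact: every Lorentz transformation moves the equatorial sphere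
to a set meeting it. -/
lemma key_intersection (n : ℕ) (hn : 1 ≤ n) (g : GL (Fin (n + 2)) ℝ)
    (hg : ∀ x, lorentzQ n (g.val.mulVec x) = lorentzQ n x) :
    ((fun x => g.val.mulVec x) '' eqSphere n ∩ eqSphere n).Nonempty := by
  classical
  set f : (Fin (n + 2) → ℝ) →ₗ[ℝ] ℝ := LinearMap.proj 0 with hf
  set H : Submodule ℝ (Fin (n + 2) → ℝ) := LinearMap.ker f with hH
  set e : (Fin (n + 2) → ℝ) ≃ₗ[ℝ] (Fin (n + 2) → ℝ) :=
    LinearEquiv.ofLinear (mulVecLin g.val) (mulVecLin g.inv)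
      (by rw [← mulVecLin_mul, g.val_inv, mulVecLin_one])
      (by rw [← mulVecLin_mul, g.inv_val, mulVecLin_one]) with he
  set V : Submodule ℝ (Fin (n + 2) → ℝ) :=
    H.map (e : (Fin (n + 2) → ℝ) →ₗ[ℝ] (Fin (n + 2) → ℝ)) with hV
  have hrange : LinearMap.range f = ⊤ := by
    rw [LinearMap.range_eq_top]
    intro r
    exact ⟨Pi.single 0 r, by simp [hf]⟩
  have hHdim : finrank ℝ H = n + 1 := by
    have := LinearMap.finrank_range_add_finrank_ker f
    rw [hrange, finrank_top] at this
    have hdim : finrank ℝ (Fin (n + 2) → ℝ) = n + 2 := by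
      simp [finrank_pi]
    rw [hdim, finrank_self] at this
    rw [hH]
    omega
  have hVdim : finrank ℝ V = n + 1 := by
    rw [hV, LinearEquiv.finrank_map_eq, hHdim]
  have hinf : 1 ≤ finrank ℝ (H ⊓ V : Submodule ℝ (Fin (n + 2) → ℝ)) := by
    have hsum := Submodule.finrank_sup_add_finrank_inf_eq H V
    have hsup : finrank ℝ (H ⊔ V : Submodule ℝ (Fin (n + 2) → ℝ)) ≤ n + 2 := by
      have := Submodule.finrank_le (H ⊔ V)
      simpa [finrank_pi] using this
    rw [hHdim, hVdim] at hsum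
    omega
  have hne : (H ⊓ V : Submodule ℝ (Fin (n + 2) → ℝ)) ≠ ⊥ := by
    intro h
    rw [h, finrank_bot] at hinf
    omega
  obtain ⟨v, hv, hvne⟩ := Submodule.exists_mem_ne_zero_of_ne_bot hne
  have hv0 : v 0 = 0 := hv.1
  have hQv : 0 < lorentzQ n v := lorentzQ_pos_of_mem_hyp n v hv0 hvne
  set c : ℝ := (Real.sqrt (lorentzQ n v))⁻¹ with hc
  set w : Fin (n + 2) → ℝ := c • v with hw
  have hQw : lorentzQ n w = 1 := by
    rw [hw, lorentzQ_smul, hc, ← Real.sqrt_inv, Real.sq_sqrt (by positivity)]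
    field_simp
  have hw0 : w 0 = 0 := by simp [hw, hv0]
  have hwV : w ∈ V := Submodule.smul_mem _ c hv.2
  obtain ⟨u, huH, huw⟩ := hwV
  have hQu : lorentzQ n u = 1 := by
    have h := hg u
    rw [show g.val.mulVec u = w from huw, hQw] at h
    exact h.symm
  exact ⟨w, ⟨u, ⟨huH, hQu⟩, huw⟩, ⟨hw0, hQw⟩⟩

/-- A point of de Sitter space of large norm. -/
lemma deSitter_unbounded (n : ℕ) (R : ℝ) : ∃ x ∈ deSitter n, R < ‖x‖ := by
  classical
  set t : ℝ := |R| + 1 with ht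
  set s : ℝ := Real.sqrt (1 + t ^ 2) with hs
  set p : Fin (n + 2) → ℝ := Fin.cons t (Fin.cons s 0) with hp
  have h0 : p 0 = t := rfl
  refine ⟨p, ?_, ?_⟩
  · show lorentzQ n p = 1
    rw [lorentzQ, h0]
    have hsum : ∑ i : Fin (n + 1), p i.succ ^ 2 = s ^ 2 := by
      simp only [hp, Fin.cons_succ]
      rw [Fin.sum_univ_succ]
      simp
    rw [hsum, hs, Real.sq_sqrt (by positivity)]
    ring
  · have hle : ‖p 0‖ ≤ ‖p‖ := norm_le_pi_norm p 0
    rw [h0, Real.norm_eq_abs] at hle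
    have ht0 : 0 ≤ t := by positivity
    have hRt : R < t := by
      have := le_abs_self R
      rw [ht]; linarith
    calc R < t := hRt
    _ = |t| := (abs_of_nonneg ht0).symm
    _ ≤ ‖p‖ := hle

/-- Calabi–Markus phenomenon: if a subgroup `Γ` of the Lorentz group
`O(1,n+1)` (`n ≥ 1`), realized as the invertible matrices preserving the Lorentz form,
acts properly discontinuously on `dS^{1,n}`, then `Γ` is finite; hence the action is not
cocompact (no compact subset of `dS^{1,n}` meets every `Γ`-orbit), since `dS^{1,n}` is
non-compact. -/
theorem calabi_markus (n : ℕ) (hn : 1 ≤ n)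
    (Γ : Subgroup (GL (Fin (n + 2)) ℝ))
    (hlor : ∀ γ ∈ Γ, ∀ x, lorentzQ n ((γ : GL (Fin (n + 2)) ℝ).val.mulVec x) = lorentzQ n x)
    (hpd : ∀ K ⊆ deSitter n, IsCompact K →
      {γ : Γ | ((fun x => ((γ : GL (Fin (n + 2)) ℝ)).val.mulVec x) '' K ∩ K).Nonempty}.Finite) :
    (Γ : Set (GL (Fin (n + 2)) ℝ)).Finite ∧
      ¬ ∃ K, IsCompact K ∧ K ⊆ deSitter n ∧
        ∀ x ∈ deSitter n, ∃ γ ∈ Γ, ∃ k ∈ K, (γ : GL (Fin (n + 2)) ℝ).val.mulVec k = x := by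
  have hfin : (Γ : Set (GL (Fin (n + 2)) ℝ)).Finite := by
    have h := hpd (eqSphere n) (eqSphere_subset n) (eqSphere_compact n)
    have huniv : {γ : Γ | ((fun x => ((γ : GL (Fin (n + 2)) ℝ)).val.mulVec x) '' eqSphere n ∩
        eqSphere n).Nonempty} = Set.univ := by
      ext γ
      simp only [Set.mem_setOf_eq, Set.mem_univ, iff_true]
      exact key_intersection n hn (γ : GL (Fin (n + 2)) ℝ) (hlor _ γ.2)
    rw [huniv] at h
    have : Finite Γ := Set.finite_univ_iff.mp h
    exact Set.toFinite _
  refine ⟨hfin, ?_⟩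
  rintro ⟨K, hKc, hKsub, hcov⟩
  have : Finite Γ := hfin.to_subtype
  set C : Set (Fin (n + 2) → ℝ) :=
    ⋃ γ : Γ, (fun x => ((γ : GL (Fin (n + 2)) ℝ)).val.mulVec x) '' K with hC
  have hCc : IsCompact C := by
    apply isCompact_iUnion
    intro γ
    apply hKc.image
    exact (mulVecLin ((γ : GL (Fin (n + 2)) ℝ)).val).continuous_of_finiteDimensional
  obtain ⟨R, hR⟩ := hCc.isBounded.exists_norm_le
  obtain ⟨x, hxdS, hxR⟩ := deSitter_unbounded n R
  have hxC : x ∈ C := by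
    obtain ⟨γ, hγ, k, hk, hkx⟩ := hcov x hxdS
    exact Set.mem_iUnion.mpr ⟨⟨γ, hγ⟩, ⟨k, hk, hkx⟩⟩
  exact absurd (hR x hxC) (not_le.mpr hxR)
end

section
/- Let Γ ⊆ SO(1,n) × G be a discrete subgroup acting properly on dS^{1,n} × G (G a connected Lie group, acting by isometries on the first factor and left translations on the second). If the projection of Γ to G is non-discrete, then there is a compact set K ⊆ G, a spacelike totally geodesic hypersphere S ⊆ dS^{1,n}, and infinitely many distinct γₙ ∈ Γ with γₙ(S × K) ∩ (S × K) ≠ ∅; hence the action is not proper, a contradiction. Consequently no discrete subgroup of SO(1,n) × G (n ≥ 2) acts properly discontinuously and cocompactly on dS^{1,n} × G. -/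
/-- The Lorentz quadratic form of signature `(1, n)` on `ℝ^{n+1}`. -/
def lorentzQ' (n : ℕ) (x : Fin (n + 1) → ℝ) : ℝ :=
  -(x 0) ^ 2 + ∑ i : Fin n, x i.succ ^ 2

/-- De Sitter space `dS^{1,n} ⊂ ℝ^{1,n}`. -/
def deSitter' (n : ℕ) : Set (Fin (n + 1) → ℝ) := {x | lorentzQ' n x = 1}

/-- The action of `SO(1,n) × G` on `dS^{1,n} × G`: isometries on the first factor and
left translations on the second. -/
def dSAct {n : ℕ} {G : Type*} [Group G] (γ : GL (Fin (n + 1)) ℝ × G)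
    (p : (Fin (n + 1) → ℝ) × G) : (Fin (n + 1) → ℝ) × G :=
  (γ.1.val.mulVec p.1, γ.2 * p.2)

/-! Every Lorentz transformation `A` maps some point of the compact spacelike hypersphere
`S = dS ∩ {x₀ = 0}` into `S` (Calabi–Markus): the conditions `x₀ = 0`, `(A x)₀ = 0` cut out a
nonzero subspace, which is spacelike and hence meets `dS`. If `K` is a compact fundamental set
and `γ` carries some `(x, 1)` into `K`, then `γ` moves a point of the compact set
`S × ({1} ∪ pr₂ K)` into that set, so properness leaves only finitely many such `γ`. Then `dS`
would be covered by the finitely many compact sets `γ₁⁻¹ (pr₁ K)`, but it is not compact. -/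

open Matrix

theorem continuous_lorentzQ' (n : ℕ) : Continuous (lorentzQ' n) := by
  unfold lorentzQ'
  fun_prop

theorem isClosed_deSitter' (n : ℕ) : IsClosed (deSitter' n) :=
  isClosed_eq (continuous_lorentzQ' n) continuous_const

theorem lorentzQ'_cons (n : ℕ) (a : ℝ) (y : Fin n → ℝ) :
    lorentzQ' n (Fin.cons a y) = -a ^ 2 + ∑ i, y i ^ 2 := by
  simp [lorentzQ']

theorem lorentzQ'_smul (n : ℕ) (c : ℝ) (x : Fin (n + 1) → ℝ) :
    lorentzQ' n (c • x) = c ^ 2 * lorentzQ' n x := by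
  simp only [lorentzQ', Pi.smul_apply, smul_eq_mul, mul_pow, ← Finset.mul_sum]
  ring

theorem lorentzQ'_pos_of_apply_zero_eq_zero {n : ℕ} {x : Fin (n + 1) → ℝ} (hx : x ≠ 0)
    (hx0 : x 0 = 0) : 0 < lorentzQ' n x := by
  obtain ⟨j, hj⟩ := Function.ne_iff.mp hx
  obtain ⟨i, rfl⟩ := Fin.exists_succ_eq.mpr (fun h : j = 0 => hj (h ▸ hx0))
  have hi : x i.succ ≠ 0 := hj
  rw [lorentzQ', hx0]
  have hi_sq : 0 < x i.succ ^ 2 := by positivity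
  have hle := Finset.single_le_sum (fun k _ => sq_nonneg (x (Fin.succ k))) (Finset.mem_univ i)
  linarith

theorem exists_mem_deSitter'_apply_zero_eq {n : ℕ} (hn : 1 ≤ n) (t : ℝ) :
    ∃ x ∈ deSitter' n, x 0 = t := by
  obtain ⟨m, rfl⟩ : ∃ m, n = m + 1 := ⟨n - 1, by omega⟩
  refine ⟨Fin.cons t (Pi.single 0 √(1 + t ^ 2) : Fin (m + 1) → ℝ), ?_, rfl⟩
  have : ∑ i : Fin (m + 1), (Pi.single 0 √(1 + t ^ 2) : Fin (m + 1) → ℝ) i ^ 2 = 1 + t ^ 2 := by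
    rw [Fintype.sum_eq_single 0 fun i hi => by simp [hi], Pi.single_eq_same,
      Real.sq_sqrt (by positivity)]
  simp only [deSitter', Set.mem_ofPred_eq, lorentzQ'_cons, this]
  ring

theorem not_isCompact_deSitter' {n : ℕ} (hn : 1 ≤ n) : ¬IsCompact (deSitter' n) := by
  intro h
  obtain ⟨t, ht⟩ := (h.image (continuous_apply 0)).bddAbove
  obtain ⟨x, hx, hxt⟩ := exists_mem_deSitter'_apply_zero_eq hn (t + 1)
  linarith [ht ⟨x, hx, hxt⟩]

def standardHypersphere (n : ℕ) : Set (Fin (n + 1) → ℝ) := deSitter' n ∩ {x | x 0 = 0}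

theorem isCompact_standardHypersphere (n : ℕ) : IsCompact (standardHypersphere n) := by
  refine (isCompact_closedBall (0 : Fin (n + 1) → ℝ) 1).of_isClosed_subset
    ((isClosed_deSitter' n).inter (isClosed_eq (continuous_apply 0) continuous_const)) ?_
  rintro x ⟨hx, hx0 : x 0 = 0⟩
  have hsum : ∑ j, x j ^ 2 = 1 := by
    rw [Fin.sum_univ_succ, hx0, ← hx]
    simp [lorentzQ', hx0]
  refine mem_closedBall_zero_iff.mpr ((pi_norm_le_iff_of_nonneg zero_le_one).mpr fun j => ?_)
  have hle := Finset.single_le_sum (fun k _ => sq_nonneg (x k)) (Finset.mem_univ j)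
  rw [Real.norm_eq_abs, ← sq_le_one_iff_abs_le_one]
  linarith

theorem exists_ne_zero_apply_zero_eq_zero_mulVec {K : Type*} [Field K] {n : ℕ} (hn : 2 ≤ n)
    (A : Matrix (Fin (n + 1)) (Fin (n + 1)) K) :
    ∃ y ≠ 0, y 0 = 0 ∧ (A *ᵥ y) 0 = 0 := by
  let f := (LinearMap.proj 0).prod ((LinearMap.proj 0).comp A.mulVecLin)
  have : LinearMap.ker f ≠ ⊥ := LinearMap.ker_ne_bot_of_finrank_lt (by simp; omega)
  obtain ⟨y, hy, hy0⟩ := Submodule.exists_mem_ne_zero_of_ne_bot this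
  refine ⟨y, hy0, ?_⟩
  simpa [f, Prod.ext_iff] using hy

theorem exists_mem_standardHypersphere_mulVec_mem {n : ℕ} (hn : 2 ≤ n)
    {A : Matrix (Fin (n + 1)) (Fin (n + 1)) ℝ} (hA : ∀ x, lorentzQ' n (A *ᵥ x) = lorentzQ' n x) :
    ∃ x ∈ standardHypersphere n, A *ᵥ x ∈ standardHypersphere n := by
  obtain ⟨y, hy, hy0, hAy0⟩ := exists_ne_zero_apply_zero_eq_zero_mulVec hn A
  have hQy := lorentzQ'_pos_of_apply_zero_eq_zero hy hy0
  set x := (√(lorentzQ' n y))⁻¹ • y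
  have hx : x ∈ deSitter' n := by
    rw [deSitter', Set.mem_ofPred_eq, lorentzQ'_smul, inv_pow, Real.sq_sqrt hQy.le,
      inv_mul_cancel₀ hQy.ne']
  refine ⟨x, ⟨hx, by simp [x, hy0]⟩, ?_, by simp [x, mulVec_smul, hAy0]⟩
  rw [deSitter', Set.mem_ofPred_eq, hA]
  exact hx

theorem dSAct_image_inter_nonempty {n : ℕ} (hn : 2 ≤ n) {G : Type*} [Group G]
    {γ : GL (Fin (n + 1)) ℝ × G} (hγ : ∀ x, lorentzQ' n (γ.1.val *ᵥ x) = lorentzQ' n x)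
    {D : Set G} (hD : 1 ∈ D) (hγD : γ.2 ∈ D) :
    (dSAct γ '' (standardHypersphere n ×ˢ D) ∩ standardHypersphere n ×ˢ D).Nonempty := by
  obtain ⟨s, hs, hγs⟩ := exists_mem_standardHypersphere_mulVec_mem hn hγ
  exact ⟨dSAct γ (s, 1), ⟨(s, 1), ⟨hs, hD⟩, rfl⟩, hγs, by simpa [dSAct] using hγD⟩

theorem calabi_markus_product_general (n : ℕ) (hn : 2 ≤ n)
    {G : Type*} [Group G] [TopologicalSpace G]
    (Γ : Subgroup (GL (Fin (n + 1)) ℝ × G))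
    (hlor : ∀ γ ∈ Γ, (∀ x, lorentzQ' n (γ.1.val.mulVec x) = lorentzQ' n x) ∧
      γ.1.val.det = 1)
    (hpd : ∀ K ⊆ (deSitter' n) ×ˢ (Set.univ : Set G), IsCompact K →
      {γ : Γ | (dSAct (γ : GL (Fin (n + 1)) ℝ × G) '' K ∩ K).Nonempty}.Finite)
    (hcc : ∃ K, IsCompact K ∧ K ⊆ (deSitter' n) ×ˢ (Set.univ : Set G) ∧
      ∀ p ∈ (deSitter' n) ×ˢ (Set.univ : Set G), ∃ γ ∈ Γ,
        dSAct γ p ∈ K) :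
    False := by
  obtain ⟨K, hK, -, hKcov⟩ := hcc
  set S := standardHypersphere n ×ˢ insert 1 (Prod.snd '' K)
  set F := {γ : Γ | (dSAct (γ : GL (Fin (n + 1)) ℝ × G) '' S ∩ S).Nonempty}
  have hF : F.Finite := hpd S (Set.prod_mono Set.inter_subset_left (Set.subset_univ _))
    ((isCompact_standardHypersphere n).prod ((hK.image continuous_snd).insert 1))
  have hcover : deSitter' n ⊆
      ⋃ γ ∈ F, mulVecLin ((γ : GL (Fin (n + 1)) ℝ × G).1⁻¹).val '' (Prod.fst '' K) := by
    intro x hx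
    obtain ⟨γ, hγ, hγK⟩ := hKcov (x, 1) ⟨hx, trivial⟩
    have hγF : (⟨γ, hγ⟩ : Γ) ∈ F := dSAct_image_inter_nonempty hn (hlor γ hγ).1
      (Set.mem_insert _ _) (Set.mem_insert_of_mem _ ⟨_, hγK, by simp [dSAct]⟩)
    exact Set.mem_biUnion hγF ⟨_, ⟨_, hγK, rfl⟩, by simp [dSAct, mulVec_mulVec]⟩
  exact not_isCompact_deSitter' (by omega) <|
    (hF.isCompact_biUnion fun γ _ => (hK.image continuous_fst).image
      (LinearMap.continuous_of_finiteDimensional _)).of_isClosed_subset (isClosed_deSitter' n) hcover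

/-- Calabi–Markus phenomenon for products: for `n ≥ 2` and `G` a connected
Lie group, no discrete subgroup `Γ ⊆ SO(1,n) × G` acts properly discontinuously and
cocompactly on `dS^{1,n} × G`.  (Its proof: if the projection of `Γ` to `G` were
non-discrete one finds a compact `K ⊆ G`, a spacelike totally geodesic hypersphere
`S ⊆ dS^{1,n}`, and infinitely many distinct `γₙ ∈ Γ` with `γₙ(S × K) ∩ (S × K) ≠ ∅`,
contradicting properness; if it were discrete one contradicts the classical
Calabi–Markus theorem.) -/
theorem calabi_markus_product (n : ℕ) (hn : 2 ≤ n)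
    {G : Type*} [Group G] [TopologicalSpace G] [IsTopologicalGroup G] [ConnectedSpace G]
    [LocallyCompactSpace G]
    (Γ : Subgroup (GL (Fin (n + 1)) ℝ × G)) [DiscreteTopology Γ]
    (hlor : ∀ γ ∈ Γ, (∀ x, lorentzQ' n (γ.1.val.mulVec x) = lorentzQ' n x) ∧
      γ.1.val.det = 1)
    (hpd : ∀ K ⊆ (deSitter' n) ×ˢ (Set.univ : Set G), IsCompact K →
      {γ : Γ | (dSAct (γ : GL (Fin (n + 1)) ℝ × G) '' K ∩ K).Nonempty}.Finite)
    (hcc : ∃ K, IsCompact K ∧ K ⊆ (deSitter' n) ×ˢ (Set.univ : Set G) ∧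
      ∀ p ∈ (deSitter' n) ×ˢ (Set.univ : Set G), ∃ γ ∈ Γ,
        dSAct γ p ∈ K) :
    False :=
  calabi_markus_product_general n hn Γ hlor hpd hcc
end
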